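/- (GSLR universality in the degenerate limit.) Fix integers H, W, B, R ≥ 1, an arbitrary latent tensor A : {0,…,H-1}×{0,…,W-1} → ℝ^R, and an arbitrary transform matrix T ∈ ℝ^{B×R}, and set X(x,y,z) = ∑_{r=0}^{R-1} A(x,y,r)·T(z,r). For σ > 0, let 𝒜_σ(x,y,r) = ∑_{(x',y')} A(x',y',r)·exp(-‖(x,y)-(x',y')‖²/(2σ²)) be the 2D Gaussian splatting with HW primitives centered at the grid points with features given by A and isotropic covariance σ²I, and let 𝒯_σ(z,r) = ∑_{k=0}^{B-1} T(k,r)·exp(-(z-k)²/(2σ²)) be the 1D Gaussian splatting with B primitives per column centered at 0,…,B-1 with features given by T. Then for every grid coordinate (x,y,z), the GSLR reconstruction ∑_{r=0}^{R-1} 𝒜_σ(x,y,r)·𝒯_σ(z,r) tends to X(x,y,z) as σ tends to 0 from the right. Hence every tensor of the form X = A ×₃ T is the pointwise limit of GSLR reconstructions. -/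

import Mathlib

/-!
As `σ → 0⁺` the Gaussian kernel `exp (-‖v - p‖² / (2σ²))` tends to `1` if `v = p` and to `0`
otherwise. Hence a Gaussian splat with pairwise distinct centers, evaluated at one of its centers,
tends to that center's feature, and the GSLR reconstruction at a grid coordinate is a finite sum
of products of two such splats.
-/

open Filter Topology

/-- The spatial grid point `(x, y) ∈ ℝ²` (with the Euclidean norm) associated to an index
in `{0,…,H-1} × {0,…,W-1}`. -/
noncomputable def gridPoint {H W : ℕ} (i : Fin H × Fin W) : EuclideanSpace ℝ (Fin 2) :=
  (WithLp.equiv 2 (Fin 2 → ℝ)).symm ![(i.1 : ℝ), (i.2 : ℝ)]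

lemma tendsto_two_mul_sq_nhdsGT_zero :
    Tendsto (fun σ : ℝ => 2 * σ ^ 2) (𝓝[>] 0) (𝓝[>] 0) := by
  refine tendsto_nhdsWithin_iff.2 ⟨?_, ?_⟩
  · have : Continuous (fun σ : ℝ => 2 * σ ^ 2) := by fun_prop
    simpa using (this.tendsto 0).mono_left nhdsWithin_le_nhds
  · filter_upwards [self_mem_nhdsWithin] with σ (hσ : 0 < σ)
    exact mul_pos two_pos (pow_pos hσ 2)

lemma tendsto_exp_neg_sq_div_two_mul_sq_nhdsGT_zero {c : ℝ} (hc : c ≠ 0) :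
    Tendsto (fun σ : ℝ => Real.exp (-c ^ 2 / (2 * σ ^ 2))) (𝓝[>] 0) (𝓝 0) := by
  have hinv := tendsto_inv_nhdsGT_zero.comp tendsto_two_mul_sq_nhdsGT_zero
  have hexp := Real.tendsto_exp_atBot.comp
    (hinv.const_mul_atTop_of_neg (neg_neg_of_pos (sq_pos_of_ne_zero hc)))
  simpa only [Function.comp_def, div_eq_mul_inv] using hexp

noncomputable def gaussianSplat {ι E : Type*} [Fintype ι] [NormedAddCommGroup E]
    (p : ι → E) (c : ι → ℝ) (σ : ℝ) (v : E) : ℝ :=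
  ∑ j, c j * Real.exp (-‖v - p j‖ ^ 2 / (2 * σ ^ 2))

lemma tendsto_gaussianSplat_center {ι E : Type*} [Fintype ι] [NormedAddCommGroup E]
    {p : ι → E} (hp : Function.Injective p) (c : ι → ℝ) (i : ι) :
    Tendsto (fun σ => gaussianSplat p c σ (p i)) (𝓝[>] 0) (𝓝 (c i)) := by
  classical
  have hterm : ∀ j, Tendsto (fun σ : ℝ => c j * Real.exp (-‖p i - p j‖ ^ 2 / (2 * σ ^ 2)))
      (𝓝[>] 0) (𝓝 (if i = j then c j else 0)) := by
    intro j
    split_ifs with hij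
    · simp [hij]
    · simpa using (tendsto_exp_neg_sq_div_two_mul_sq_nhdsGT_zero
        (norm_ne_zero_iff.2 (sub_ne_zero.2 (hp.ne hij)))).const_mul (c j)
  simpa [gaussianSplat] using tendsto_finsetSum Finset.univ fun j _ => hterm j

lemma gridPoint_injective {H W : ℕ} : Function.Injective (gridPoint (H := H) (W := W)) := by
  intro i j h
  have h' := (WithLp.equiv 2 (Fin 2 → ℝ)).symm.injective h
  have h0 := congrFun h' 0
  have h1 := congrFun h' 1
  simp only [Matrix.cons_val_zero, Matrix.cons_val_one, Nat.cast_inj, Fin.val_inj] at h0 h1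
  exact Prod.ext h0 h1

theorem gslr_universality_degenerate_limit_general (H W B R : ℕ)
    (A : Fin H → Fin W → Fin R → ℝ) (T : Matrix (Fin B) (Fin R) ℝ)
    (x : Fin H) (y : Fin W) (z : Fin B) :
    Tendsto
      (fun σ : ℝ =>
        ∑ r : Fin R,
          (∑ j : Fin H × Fin W,
            A j.1 j.2 r * Real.exp (-‖gridPoint (x, y) - gridPoint j‖ ^ 2 / (2 * σ ^ 2))) *
          (∑ k : Fin B,
            T k r * Real.exp (-((z : ℝ) - (k : ℝ)) ^ 2 / (2 * σ ^ 2))))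
      (nhdsWithin 0 (Set.Ioi 0)) (nhds (∑ r : Fin R, A x y r * T z r)) := by
  have hA (r : Fin R) :=
    tendsto_gaussianSplat_center gridPoint_injective (fun j => A j.1 j.2 r) (x, y)
  have hT (r : Fin R) := tendsto_gaussianSplat_center
    (Nat.cast_injective.comp Fin.val_injective : Function.Injective fun k : Fin B => (k : ℝ))
    (fun k => T k r) z
  convert tendsto_finsetSum Finset.univ fun r _ => (hA r).mul (hT r) using 1
  ext σ
  simp only [gaussianSplat, Function.comp_apply, Real.norm_eq_abs, sq_abs]

/-- GSLR universality in the degenerate limit: for any latent tensor `A` and transform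
matrix `T`, with the 2D Gaussian splatting `𝒜_σ` (grid-centered primitives with features
`A` and isotropic covariance `σ²I`) and the 1D Gaussian splatting `𝒯_σ` (grid-centered
primitives with features `T`), the GSLR reconstruction `∑_r 𝒜_σ(x,y,r)·𝒯_σ(z,r)` tends to
`(A ×₃ T)(x,y,z) = ∑_r A(x,y,r)·T(z,r)` at every grid coordinate as `σ → 0⁺`. -/
theorem gslr_universality_degenerate_limit (H W B R : ℕ)
    (hH : 1 ≤ H) (hW : 1 ≤ W) (hB : 1 ≤ B) (hR : 1 ≤ R)
    (A : Fin H → Fin W → Fin R → ℝ) (T : Matrix (Fin B) (Fin R) ℝ)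
    (x : Fin H) (y : Fin W) (z : Fin B) :
    Tendsto
      (fun σ : ℝ =>
        ∑ r : Fin R,
          (∑ j : Fin H × Fin W,
            A j.1 j.2 r * Real.exp (-‖gridPoint (x, y) - gridPoint j‖ ^ 2 / (2 * σ ^ 2))) *
          (∑ k : Fin B,
            T k r * Real.exp (-((z : ℝ) - (k : ℝ)) ^ 2 / (2 * σ ^ 2))))
      (nhdsWithin 0 (Set.Ioi 0)) (nhds (∑ r : Fin R, A x y r * T z r)) :=
  gslr_universality_degenerate_limit_general H W B R A T x y z
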